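/- Canonicity of axiom B3: let F = (A, Q, ▷, ◇, ▷', ◇') be a heterogeneous LRC-algebra with canonical extensions A^δ, Q^δ, π-extended operation ▷^π, and σ-extended product ·^σ. Then q ▷^π (w ▷^π u) ≤ (q ·^σ w) ▷^π u for all q, w ∈ Q^δ and u ∈ A^δ. -/

import Mathlib

/-! ## Heterogeneous LRC-algebras -/

/-- A heterogeneous LRC-algebra `F = (W, R, ▷, ◇, ▷', ◇')`: `W` is a Heyting
algebra, `R` is a bounded distributive lattice with an associative product
`·` (here `mul`) preserving finite joins in each coordinate whose unit is the
top element `1 = ⊤` of `R`; `◇ : W → W` (`dia`) and `◇' : R → W` (`diaR`)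
preserve finite joins; `▷ : R × W → W` (`box`) turns finite joins in its first
coordinate into meets and is monotone in its second coordinate;
`▷' : R × R → W` (`boxR`) turns finite joins in its first coordinate into
meets and preserves finite meets in its second coordinate; and the axioms
B3, BD1, BD2 hold. -/
structure LRCAlgebra (W : Type*) (R : Type*) [iW : HeytingAlgebra W]
    [iR : DistribLattice R] [iB : BoundedOrder R] where
  mul : R → R → R
  mul_assoc : ∀ a b c, mul (mul a b) c = mul a (mul b c)
  mul_top : ∀ a, mul a ⊤ = a
  top_mul : ∀ a, mul ⊤ a = a
  mul_sup_left : ∀ a b c, mul (a ⊔ b) c = mul a c ⊔ mul b c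
  mul_sup_right : ∀ a b c, mul a (b ⊔ c) = mul a b ⊔ mul a c
  mul_bot_left : ∀ a, mul ⊥ a = ⊥
  mul_bot_right : ∀ a, mul a ⊥ = ⊥
  dia : W → W
  dia_bot : dia ⊥ = ⊥
  dia_sup : ∀ a b, dia (a ⊔ b) = dia a ⊔ dia b
  diaR : R → W
  diaR_bot : diaR ⊥ = ⊥
  diaR_sup : ∀ a b, diaR (a ⊔ b) = diaR a ⊔ diaR b
  box : R → W → W
  box_sup : ∀ α β a, box (α ⊔ β) a = box α a ⊓ box β a
  box_bot : ∀ a, box ⊥ a = ⊤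
  box_mono : ∀ (α : R) {a b : W}, a ≤ b → box α a ≤ box α b
  boxR : R → R → W
  boxR_sup : ∀ α β γ, boxR (α ⊔ β) γ = boxR α γ ⊓ boxR β γ
  boxR_bot : ∀ γ, boxR ⊥ γ = ⊤
  boxR_inf : ∀ α β γ, boxR α (β ⊓ γ) = boxR α β ⊓ boxR α γ
  boxR_top : ∀ α, boxR α ⊤ = ⊤
  b3 : ∀ α β a, box α (box β a) ≤ box (mul α β) a
  bd1 : ∀ α a, diaR α ⊓ box α a ≤ dia a
  bd2 : ∀ α β, boxR α β ≤ box α (diaR β)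

/-! ## Canonical extensions of bounded distributive lattices -/

/-- A *canonical extension* of a bounded distributive lattice `L` is a
complete (distributive) lattice `Lδ` containing `L` as a bounded sublattice
(via the embedding `e`) such that (denseness) every element of `Lδ` is both a
join of closed elements (meets of elements of `L`) and a meet of open elements
(joins of elements of `L`), and (compactness) whenever `⋀ e '' S ≤ ⋁ e '' T`
there are finite `F ⊆ S`, `G ⊆ T` with `⋀ e '' F ≤ ⋁ e '' G`. -/
structure CanonicalExtension (L : Type*) [DistribLattice L] [OrderBot L]
    [OrderTop L] (Lδ : Type*) [CompleteLattice Lδ] where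
  e : L → Lδ
  inj : Function.Injective e
  map_sup : ∀ a b, e (a ⊔ b) = e a ⊔ e b
  map_inf : ∀ a b, e (a ⊓ b) = e a ⊓ e b
  map_bot : e ⊥ = ⊥
  map_top : e ⊤ = ⊤
  dense_closed : ∀ u : Lδ,
    u = sSup {k | (∃ S : Set L, k = sInf (e '' S)) ∧ k ≤ u}
  dense_open : ∀ u : Lδ,
    u = sInf {o | (∃ S : Set L, o = sSup (e '' S)) ∧ u ≤ o}
  compact : ∀ S T : Set L, sInf (e '' S) ≤ sSup (e '' T) →
    ∃ Fs Gs : Finset L, ↑Fs ⊆ S ∧ ↑Gs ⊆ T ∧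
      sInf (e '' ↑Fs) ≤ sSup (e '' ↑Gs)

namespace CanonicalExtension

variable {L : Type*} [DistribLattice L] [OrderBot L] [OrderTop L]
  {Lδ : Type*} [CompleteLattice Lδ]

/-- An element of `Lδ` is *closed* if it is a meet of elements of `L`. -/
def IsClosed (C : CanonicalExtension L Lδ) (k : Lδ) : Prop :=
  ∃ S : Set L, k = sInf (C.e '' S)

/-- An element of `Lδ` is *open* if it is a join of elements of `L`. -/
def IsOpen (C : CanonicalExtension L Lδ) (o : Lδ) : Prop :=
  ∃ S : Set L, o = sSup (C.e '' S)

end CanonicalExtension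

/-! ## The σ- and π-extensions of the operations of a heterogeneous
LRC-algebra to the canonical extensions -/

section Extensions

variable {W R : Type*} [HeytingAlgebra W] [DistribLattice R] [BoundedOrder R]
  {Wδ Rδ : Type*} [CompletelyDistribLattice Wδ] [CompletelyDistribLattice Rδ]
  (F : LRCAlgebra W R)
  (CW : CanonicalExtension W Wδ) (CR : CanonicalExtension R Rδ)

/-- `◇^σ`: for closed `k`, `◇^σ k = ⋀{◇a : a ∈ W, k ≤ a}`, and for arbitrary
`u`, `◇^σ u = ⋁{◇^σ k : k closed, k ≤ u}`. -/
noncomputable def diaSigma (u : Wδ) : Wδ :=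
  ⨆ k : {k : Wδ // CW.IsClosed k ∧ k ≤ u},
    ⨅ a : {a : W // k.1 ≤ CW.e a}, CW.e (F.dia a.1)

/-- `◇'^σ`: for closed `κ`, `◇'^σ κ = ⋀{◇'α : α ∈ R, κ ≤ α}`, and for
arbitrary `q`, `◇'^σ q = ⋁{◇'^σ κ : κ closed, κ ≤ q}`. -/
noncomputable def diaRSigma (q : Rδ) : Wδ :=
  ⨆ κ : {κ : Rδ // CR.IsClosed κ ∧ κ ≤ q},
    ⨅ α : {α : R // κ.1 ≤ CR.e α}, CW.e (F.diaR α.1)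

/-- `κ ▷^π o` for `κ ∈ K(Rδ)`, `o ∈ O(Wδ)`:
`⋁{α ▷ a : a ∈ W, a ≤ o, α ∈ R, κ ≤ α}`. -/
noncomputable def boxPiKO (κ : Rδ) (o : Wδ) : Wδ :=
  ⨆ p : {p : R × W // CW.e p.2 ≤ o ∧ κ ≤ CR.e p.1}, CW.e (F.box p.1.1 p.1.2)

/-- `▷^π`: `q ▷^π u = ⋀{κ ▷^π o : o open, u ≤ o, κ closed, κ ≤ q}`. -/
noncomputable def boxPi (q : Rδ) (u : Wδ) : Wδ :=
  ⨅ x : {x : Rδ × Wδ // CW.IsOpen x.2 ∧ u ≤ x.2 ∧ CR.IsClosed x.1 ∧ x.1 ≤ q},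
    boxPiKO F CW CR x.1.1 x.1.2

/-- `κ ▷'^π ω` for `κ ∈ K(Rδ)`, `ω ∈ O(Rδ)`:
`⋁{α ▷' β : β ∈ R, β ≤ ω, α ∈ R, κ ≤ α}`. -/
noncomputable def boxRPiKO (κ ω : Rδ) : Wδ :=
  ⨆ p : {p : R × R // CR.e p.2 ≤ ω ∧ κ ≤ CR.e p.1}, CW.e (F.boxR p.1.1 p.1.2)

/-- `▷'^π`: `q ▷'^π w = ⋀{κ ▷'^π ω : ω open, w ≤ ω, κ closed, κ ≤ q}`. -/
noncomputable def boxRPi (q w : Rδ) : Wδ :=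
  ⨅ x : {x : Rδ × Rδ // CR.IsOpen x.2 ∧ w ≤ x.2 ∧ CR.IsClosed x.1 ∧ x.1 ≤ q},
    boxRPiKO F CW CR x.1.1 x.1.2

/-- `κ₁ ·^σ κ₂` for closed `κ₁, κ₂`: `⋀{α·β : α, β ∈ R, κ₁ ≤ α, κ₂ ≤ β}`. -/
noncomputable def mulSigmaKK (κ₁ κ₂ : Rδ) : Rδ :=
  ⨅ p : {p : R × R // κ₁ ≤ CR.e p.1 ∧ κ₂ ≤ CR.e p.2}, CR.e (F.mul p.1.1 p.1.2)

/-- `·^σ`: `q₁ ·^σ q₂ = ⋁{κ₁ ·^σ κ₂ : κ₁, κ₂ closed, κ₁ ≤ q₁, κ₂ ≤ q₂}`. -/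
noncomputable def mulSigma (q₁ q₂ : Rδ) : Rδ :=
  ⨆ p : {p : Rδ × Rδ // CR.IsClosed p.1 ∧ CR.IsClosed p.2 ∧
      p.1 ≤ q₁ ∧ p.2 ≤ q₂}, mulSigmaKK F CR p.1.1 p.1.2

end Extensions

variable {W R : Type*} [HeytingAlgebra W] [DistribLattice R] [BoundedOrder R]
  {Wδ Rδ : Type*} [CompletelyDistribLattice Wδ] [CompletelyDistribLattice Rδ]

/-!
Compactness reduces B3 for `▷^π` on closed–open pairs to B3 in `F`: an element `b` of `W`
below `κ₂ ▷^π o` lies below finitely many `βᵢ ▷ aᵢ`, hence below `(⋀ βᵢ) ▷ (⋁ aᵢ)`, and then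
`α ▷ b ≤ (α · ⋀ βᵢ) ▷ (⋁ aᵢ)`. Since `κ ▷^π o` is itself open, this gives
`q ▷^π (w ▷^π u) ≤ ⋀ (κ₁ ·^σ κ₂) ▷^π o` over closed `κ₁ ≤ q`, `κ₂ ≤ w`. To pass to a closed
`κ ≤ q ·^σ w = ⋁ κ₁ ·^σ κ₂`, distribute the meet over the joins defining each `(κ₁ ·^σ κ₂) ▷^π o`
(complete distributivity of `Wδ`); for each choice of `αᵢ ▷ aᵢ`, compactness puts `κ` below a
finite join `⋁ αᵢ`, and `⋀ (αᵢ ▷ aᵢ) ≤ (⋁ αᵢ) ▷ (⋁ aᵢ)`.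
-/

namespace CanonicalExtension

variable {L : Type*} [DistribLattice L] [OrderBot L] [OrderTop L]
  {Lδ : Type*} [CompleteLattice Lδ] (C : CanonicalExtension L Lδ)

def toSupBotHom : SupBotHom L Lδ where
  toFun := C.e
  map_sup' := C.map_sup
  map_bot' := C.map_bot

def toInfTopHom : InfTopHom L Lδ where
  toFun := C.e
  map_inf' := C.map_inf
  map_top' := C.map_top

theorem e_finset_sup {ι : Type*} (s : Finset ι) (f : ι → L) :
    C.e (s.sup f) = s.sup fun i => C.e (f i) :=
  map_finset_sup C.toSupBotHom s f

theorem e_finset_inf {ι : Type*} (s : Finset ι) (f : ι → L) :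
    C.e (s.inf f) = s.inf fun i => C.e (f i) :=
  map_finset_inf C.toInfTopHom s f

theorem e_le_e_iff {a b : L} : C.e a ≤ C.e b ↔ a ≤ b := by
  refine ⟨fun h => inf_eq_left.mp (C.inj ?_), fun h => OrderHomClass.mono C.toSupBotHom h⟩
  rw [C.map_inf, inf_eq_left.mpr h]

theorem isClosed_e (a : L) : C.IsClosed (C.e a) :=
  ⟨{a}, by simp⟩

theorem exists_finset_le_of_isClosed_le_iSup {κ : Lδ} (hκ : C.IsClosed κ) {ι : Type*}
    (f : ι → L) (h : κ ≤ ⨆ i, C.e (f i)) : ∃ s : Finset ι, κ ≤ C.e (s.sup f) := by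
  classical
  obtain ⟨S, rfl⟩ := hκ
  obtain ⟨Fs, Gs, hFs, hGs, hFG⟩ :=
    C.compact S (Set.range f) (h.trans_eq (by rw [← Set.range_comp]; rfl))
  obtain ⟨s, -, rfl⟩ := Finset.subset_set_image_iff.mp (Set.image_univ ▸ hGs)
  refine ⟨s, (sInf_le_sInf (Set.image_mono hFs)).trans (hFG.trans (sSup_le ?_))⟩
  rintro _ ⟨_, hx, rfl⟩
  obtain ⟨i, hi, rfl⟩ := Finset.mem_image.mp hx
  exact C.e_le_e_iff.mpr (Finset.le_sup (f := f) hi)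

theorem exists_finset_le_of_e_le_iSup {a : L} {ι : Type*} (f : ι → L)
    (h : C.e a ≤ ⨆ i, C.e (f i)) : ∃ s : Finset ι, a ≤ s.sup f :=
  (C.exists_finset_le_of_isClosed_le_iSup (C.isClosed_e a) f h).imp fun _ => C.e_le_e_iff.mp

end CanonicalExtension

namespace LRCAlgebra

variable (F : LRCAlgebra W R)

theorem box_anti {α β : R} (h : α ≤ β) (a : W) : F.box β a ≤ F.box α a := by
  rw [← sup_eq_right.mpr h, F.box_sup]
  exact inf_le_left

theorem box_finset_sup {ι : Type*} (s : Finset ι) (f : ι → R) (a : W) :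
    F.box (s.sup f) a = s.inf fun i => F.box (f i) a := by
  classical
  induction s using Finset.induction_on with
  | empty => exact F.box_bot a
  | insert _ _ _ ih => rw [Finset.sup_insert, Finset.inf_insert, F.box_sup, ih]

end LRCAlgebra

section PiExtension

variable {F : LRCAlgebra W R} {CW : CanonicalExtension W Wδ} {CR : CanonicalExtension R Rδ}

theorem e_box_le_boxPiKO {κ : Rδ} {o : Wδ} {α : R} {a : W} (ha : CW.e a ≤ o)
    (hα : κ ≤ CR.e α) : CW.e (F.box α a) ≤ boxPiKO F CW CR κ o :=
  le_iSup (fun p : {p : R × W // CW.e p.2 ≤ o ∧ κ ≤ CR.e p.1} => CW.e (F.box p.1.1 p.1.2))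
    ⟨(α, a), ha, hα⟩

theorem isOpen_boxPiKO (κ : Rδ) (o : Wδ) : CW.IsOpen (boxPiKO F CW CR κ o) :=
  ⟨Set.range fun p : {p : R × W // CW.e p.2 ≤ o ∧ κ ≤ CR.e p.1} => F.box p.1.1 p.1.2, by
    rw [← Set.range_comp]; rfl⟩

theorem boxPi_le_boxPiKO {q κ : Rδ} {u o : Wδ} (ho : CW.IsOpen o) (huo : u ≤ o)
    (hκ : CR.IsClosed κ) (hκq : κ ≤ q) : boxPi F CW CR q u ≤ boxPiKO F CW CR κ o :=
  iInf_le (fun x : {x : Rδ × Wδ // CW.IsOpen x.2 ∧ u ≤ x.2 ∧ CR.IsClosed x.1 ∧ x.1 ≤ q} =>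
    boxPiKO F CW CR x.1.1 x.1.2) ⟨(κ, o), ho, huo, hκ, hκq⟩

theorem mulSigmaKK_le {κ₁ κ₂ : Rδ} {α β : R} (hα : κ₁ ≤ CR.e α) (hβ : κ₂ ≤ CR.e β) :
    mulSigmaKK F CR κ₁ κ₂ ≤ CR.e (F.mul α β) :=
  iInf_le (fun p : {p : R × R // κ₁ ≤ CR.e p.1 ∧ κ₂ ≤ CR.e p.2} => CR.e (F.mul p.1.1 p.1.2))
    ⟨(α, β), hα, hβ⟩

theorem boxPiKO_boxPiKO_le (κ₁ κ₂ : Rδ) (o : Wδ) :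
    boxPiKO F CW CR κ₁ (boxPiKO F CW CR κ₂ o) ≤
      boxPiKO F CW CR (mulSigmaKK F CR κ₁ κ₂) o := by
  refine iSup_le fun ⟨⟨α, b⟩, hb, hα⟩ => ?_
  obtain ⟨s, hbs⟩ := CW.exists_finset_le_of_e_le_iSup _ hb
  set β := s.inf fun p => p.1.1
  set a := s.sup fun p => p.1.2
  have hb_le : b ≤ F.box β a := hbs.trans <| Finset.sup_le fun p hp =>
    (F.box_anti (Finset.inf_le hp) _).trans (F.box_mono β (Finset.le_sup (f := fun p => p.1.2) hp))
  have hκ₂β : κ₂ ≤ CR.e β := by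
    rw [CR.e_finset_inf]
    exact Finset.le_inf fun p _ => p.2.2
  have hao : CW.e a ≤ o := by
    rw [CW.e_finset_sup]
    exact Finset.sup_le fun p _ => p.2.1
  calc CW.e (F.box α b)
      ≤ CW.e (F.box (F.mul α β) a) :=
        CW.e_le_e_iff.mpr ((F.box_mono α hb_le).trans (F.b3 α β a))
    _ ≤ boxPiKO F CW CR (mulSigmaKK F CR κ₁ κ₂) o := e_box_le_boxPiKO hao (mulSigmaKK_le hα hκ₂β)

theorem iInf_boxPiKO_le_of_le_iSup {ι : Type*} {κ : Rδ} {μ : ι → Rδ} (hκ : CR.IsClosed κ)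
    (hκμ : κ ≤ ⨆ i, μ i) (o : Wδ) :
    ⨅ i, boxPiKO F CW CR (μ i) o ≤ boxPiKO F CW CR κ o := by
  simp only [boxPiKO]
  rw [iInf_iSup_eq]
  refine iSup_le fun p => ?_
  set γ := fun i => (p i).1.1
  set a := fun i => (p i).1.2
  obtain ⟨s, hκs⟩ := CR.exists_finset_le_of_isClosed_le_iSup hκ γ
    (hκμ.trans (iSup_mono fun i => (p i).2.2))
  have hao : CW.e (s.sup a) ≤ o := by
    rw [CW.e_finset_sup]
    exact Finset.sup_le fun i _ => (p i).2.1
  calc ⨅ i, CW.e (F.box (γ i) (a i))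
      ≤ CW.e (F.box (s.sup γ) (s.sup a)) := by
        rw [F.box_finset_sup, CW.e_finset_inf]
        refine Finset.le_inf fun i hi => (iInf_le _ i).trans ?_
        exact CW.e_le_e_iff.mpr (F.box_mono _ (Finset.le_sup hi))
    _ ≤ boxPiKO F CW CR κ o := e_box_le_boxPiKO hao hκs

end PiExtension

/-- **Canonicity of axiom B3**: in the canonical extension of a heterogeneous
LRC-algebra, `q ▷^π (w ▷^π u) ≤ (q ·^σ w) ▷^π u` for all `q, w ∈ Rδ` and
`u ∈ Wδ`. -/
theorem canonicity_b3 (F : LRCAlgebra W R)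
    (CW : CanonicalExtension W Wδ) (CR : CanonicalExtension R Rδ)
    (q w : Rδ) (u : Wδ) :
    boxPi F CW CR q (boxPi F CW CR w u) ≤
      boxPi F CW CR (mulSigma F CR q w) u := by
  refine le_iInf fun ⟨⟨κ, o⟩, ho, huo, hκ, hκqw⟩ => ?_
  calc boxPi F CW CR q (boxPi F CW CR w u)
      ≤ ⨅ p : {p : Rδ × Rδ // CR.IsClosed p.1 ∧ CR.IsClosed p.2 ∧ p.1 ≤ q ∧ p.2 ≤ w},
          boxPiKO F CW CR (mulSigmaKK F CR p.1.1 p.1.2) o :=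
        le_iInf fun ⟨⟨κ₁, κ₂⟩, hκ₁, hκ₂, hκ₁q, hκ₂w⟩ =>
          (boxPi_le_boxPiKO (isOpen_boxPiKO κ₂ o) (boxPi_le_boxPiKO ho huo hκ₂ hκ₂w) hκ₁ hκ₁q).trans
            (boxPiKO_boxPiKO_le κ₁ κ₂ o)
    _ ≤ boxPiKO F CW CR κ o := iInf_boxPiKO_le_of_le_iSup hκ hκqw o
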